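/- Let P1 be a SPARQL graph pattern containing no UNION and no OPT subpattern, and let P2 be a BGP with sv(P1) ∩ var(P2) ≠ ∅. Then for every RDF graph G, ⟦MINUS(P1,P2)⟧_G = ⟦FNE(P1,P2)⟧_G. -/

import Mathlib

/-!
Formalization of SPARQL graph-pattern syntax and semantics, following
Pérez et al. and the paper "SPARQL in N3".

* IRIs, blank nodes and literals are three pairwise disjoint infinite sets,
  packaged in the type `RTerm` (the set `T = I ∪ B ∪ L`).
* Variables form a further disjoint infinite set `Var`.
* A pattern term (`PTerm`) is an element of `T ∪ V`.
* A solution mapping is a partial function from variables to RDF terms,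
  modeled as `Var → Option RTerm`.
-/

namespace SparqlN3

/-- RDF terms: IRIs, blank nodes, literals — three disjoint infinite sets. -/
inductive RTerm : Type
  | iri : ℕ → RTerm
  | bnode : ℕ → RTerm
  | lit : ℕ → RTerm
deriving DecidableEq

/-- Variables (an infinite set, disjoint from `RTerm` by typing). -/
abbrev Var : Type := ℕ

/-- Elements of `T ∪ V`. -/
abbrev PTerm : Type := RTerm ⊕ Var

/-- Triple patterns: elements of `(T ∪ V) × (T ∪ V) × (T ∪ V)`. -/
abbrev TriplePat : Type := PTerm × PTerm × PTerm

/-- Ground RDF triples. -/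
abbrev Triple : Type := RTerm × RTerm × RTerm

/-- An RDF graph: a set of triples. -/
abbrev Graph : Type := Set Triple

/-- A basic graph pattern: a finite set of triple patterns. -/
abbrev BGP : Type := Finset TriplePat

/-- A (partial) mapping from variables to RDF terms. -/
abbrev Mapping : Type := Var → Option RTerm

/-- The domain of a mapping. -/
def mdom (μ : Mapping) : Set Var := {x | μ x ≠ none}

/-- A solution mapping has a finite domain. -/
def FiniteDom (μ : Mapping) : Prop := (mdom μ).Finite

/-- Compatibility of two mappings: they agree on the common domain. -/
def compat (μ₁ μ₂ : Mapping) : Prop :=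
  ∀ x a b, μ₁ x = some a → μ₂ x = some b → a = b

/-- Union `μ₁ ∪ μ₂` of two (compatible) mappings. -/
def munion (μ₁ μ₂ : Mapping) : Mapping :=
  fun x => (μ₁ x).elim (μ₂ x) some

def varsPT : PTerm → Finset Var
  | .inl _ => ∅
  | .inr v => {v}

/-- Variables of a triple pattern. -/
def varsTP (t : TriplePat) : Finset Var :=
  varsPT t.1 ∪ varsPT t.2.1 ∪ varsPT t.2.2

/-- Variables of a BGP. -/
def varsBGP (P : BGP) : Finset Var := P.biUnion varsTP

/-- Substitution on a pattern term: replace variables in the domain of `μ`. -/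
def substPT (μ : Mapping) : PTerm → PTerm
  | .inl t => .inl t
  | .inr v => (μ v).elim (.inr v) .inl

/-- Substitution `tμ` on a triple pattern (componentwise). -/
def substTP (μ : Mapping) (t : TriplePat) : TriplePat :=
  (substPT μ t.1, substPT μ t.2.1, substPT μ t.2.2)

/-- Substitution `Pμ` on a BGP (literal replacement of variables in `dom μ`). -/
def substBGP (μ : Mapping) (P : BGP) : BGP := P.image (substTP μ)

/-- View a ground triple as a triple pattern. -/
def toPat (t : Triple) : TriplePat := (.inl t.1, .inl t.2.1, .inl t.2.2)

/-- `InstIn G μ P` : the instantiation `Pμ` is contained in `G`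
(every triple pattern of `P` becomes, under `μ`, a ground triple of `G`). -/
def InstIn (G : Graph) (μ : Mapping) (P : BGP) : Prop :=
  ∀ tp ∈ P, ∃ t ∈ G, substTP μ tp = toPat t

/-- Evaluation of a BGP: `⟦P⟧_G = {μ | dom(μ) = var(P) ∧ Pμ ⊆ G}`. -/
def bgpEval (G : Graph) (P : BGP) : Set Mapping :=
  {μ | mdom μ = ↑(varsBGP P) ∧ InstIn G μ P}

/-- SPARQL graph patterns.  Filter conditions are modeled as predicates
on solution mappings. -/
inductive GP : Type
  | bgp : BGP → GP
  | and : GP → GP → GP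
  | union : GP → GP → GP
  | minus : GP → GP → GP
  | fe : GP → GP → GP
  | fne : GP → GP → GP
  | filter : GP → (Mapping → Prop) → GP
  | opt : GP → GP → (Mapping → Prop) → GP

/-- Substitution `Pμ` on a graph pattern, applied componentwise to triple
patterns and recursively through the constructors; for filters, the
predicate is composed with `μ`. -/
def substGP (μ : Mapping) : GP → GP
  | .bgp P => .bgp (substBGP μ P)
  | .and P₁ P₂ => .and (substGP μ P₁) (substGP μ P₂)
  | .union P₁ P₂ => .union (substGP μ P₁) (substGP μ P₂)
  | .minus P₁ P₂ => .minus (substGP μ P₁) (substGP μ P₂)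
  | .fe P₁ P₂ => .fe (substGP μ P₁) (substGP μ P₂)
  | .fne P₁ P₂ => .fne (substGP μ P₁) (substGP μ P₂)
  | .filter P R => .filter (substGP μ P) (fun ν => R (munion μ ν))
  | .opt P₁ P₂ R => .opt (substGP μ P₁) (substGP μ P₂) (fun ν => R (munion μ ν))

/-- Structural depth (used as termination measure for `eval`). -/
def depth : GP → ℕ
  | .bgp _ => 0
  | .and P₁ P₂ => max (depth P₁) (depth P₂) + 1
  | .union P₁ P₂ => max (depth P₁) (depth P₂) + 1
  | .minus P₁ P₂ => max (depth P₁) (depth P₂) + 1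
  | .fe P₁ P₂ => max (depth P₁) (depth P₂) + 1
  | .fne P₁ P₂ => max (depth P₁) (depth P₂) + 1
  | .filter P _ => depth P + 1
  | .opt P₁ P₂ _ => max (depth P₁) (depth P₂) + 1

theorem depth_substGP (μ : Mapping) (P : GP) : depth (substGP μ P) = depth P := by
  induction P <;> simp [substGP, depth, *]

/-- The scope `sv` of a graph pattern. -/
def sv : GP → Finset Var
  | .bgp P => varsBGP P
  | .and P₁ P₂ => sv P₁ ∪ sv P₂
  | .union P₁ P₂ => sv P₁ ∪ sv P₂
  | .minus P₁ _ => sv P₁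
  | .fe P₁ _ => sv P₁
  | .fne P₁ _ => sv P₁
  | .filter P _ => sv P
  | .opt P₁ P₂ _ => sv P₁ ∪ sv P₂

/-- The variables `var(P)` occurring in a graph pattern. -/
def varsGP : GP → Finset Var
  | .bgp P => varsBGP P
  | .and P₁ P₂ => varsGP P₁ ∪ varsGP P₂
  | .union P₁ P₂ => varsGP P₁ ∪ varsGP P₂
  | .minus P₁ P₂ => varsGP P₁ ∪ varsGP P₂
  | .fe P₁ P₂ => varsGP P₁ ∪ varsGP P₂
  | .fne P₁ P₂ => varsGP P₁ ∪ varsGP P₂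
  | .filter P _ => varsGP P
  | .opt P₁ P₂ _ => varsGP P₁ ∪ varsGP P₂

/-- Evaluation `⟦P⟧_G` of SPARQL graph patterns over an RDF graph `G`. -/
def eval (G : Graph) : GP → Set Mapping
  | .bgp P => bgpEval G P
  | .and P₁ P₂ =>
      {μ | ∃ μ₁ ∈ eval G P₁, ∃ μ₂ ∈ eval G P₂, compat μ₁ μ₂ ∧ μ = munion μ₁ μ₂}
  | .union P₁ P₂ => eval G P₁ ∪ eval G P₂
  | .minus P₁ P₂ =>
      {μ ∈ eval G P₁ | ∀ μ' ∈ eval G P₂, ¬ compat μ μ' ∨ mdom μ ∩ mdom μ' = ∅}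
  | .fe P₁ P₂ =>
      {μ ∈ eval G P₁ | (eval G (substGP μ P₂)).Nonempty}
  | .fne P₁ P₂ =>
      {μ ∈ eval G P₁ | eval G (substGP μ P₂) = ∅}
  | .filter P R => {μ ∈ eval G P | R μ}
  | .opt P₁ P₂ R =>
      {μ | ∃ μ₁ ∈ eval G P₁, ∃ μ₂ ∈ eval G P₂,
          compat μ₁ μ₂ ∧ R (munion μ₁ μ₂) ∧ μ = munion μ₁ μ₂}
        ∪ {μ₁ ∈ eval G P₁ | ¬ ∃ μ₂ ∈ eval G P₂, compat μ₁ μ₂ ∧ R (munion μ₁ μ₂)}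
termination_by P => depth P
decreasing_by all_goals (simp [depth_substGP, depth]; try omega)

/-- A pattern contains no UNION and no OPT subpattern. -/
def NoUnionOpt : GP → Prop
  | .bgp _ => True
  | .and P₁ P₂ => NoUnionOpt P₁ ∧ NoUnionOpt P₂
  | .union _ _ => False
  | .minus P₁ P₂ => NoUnionOpt P₁ ∧ NoUnionOpt P₂
  | .fe P₁ P₂ => NoUnionOpt P₁ ∧ NoUnionOpt P₂
  | .fne P₁ P₂ => NoUnionOpt P₁ ∧ NoUnionOpt P₂
  | .filter P _ => NoUnionOpt P
  | .opt _ _ _ => False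

/-- Renaming of variables in a pattern term. -/
def renamePT (σ : Var → Var) : PTerm → PTerm
  | .inl t => .inl t
  | .inr v => .inr (σ v)

/-- Renaming of variables in a triple pattern. -/
def renameTP (σ : Var → Var) (t : TriplePat) : TriplePat :=
  (renamePT σ t.1, renamePT σ t.2.1, renamePT σ t.2.2)

/-- Renaming `Qσ` of variables in a BGP. -/
def renameBGP (σ : Var → Var) (P : BGP) : BGP := P.image (renameTP σ)

/-- Restriction of a mapping to a set of variables. -/
def restrict (μ : Mapping) (S : Finset Var) : Mapping :=
  fun x => if x ∈ S then μ x else none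

/-!
On a pattern without UNION and OPT every solution is defined exactly on the scope `sv P₁`, so it
shares a variable with every solution of the BGP `P₂`, and the MINUS condition reduces to
incompatibility with all solutions of `P₂`. That in turn is emptiness of `⟦P₂μ⟧`: substituting `μ`
and then `ν` is substituting `μ ∪ ν`, so a solution `μ'` of `P₂` compatible with `μ` restricts to
a solution of `P₂μ`, and a solution `ν` of `P₂μ` gives the solution `(μ ∪ ν)|var(P₂)` of `P₂`.
-/

lemma mdom_munion (μ₁ μ₂ : Mapping) : mdom (munion μ₁ μ₂) = mdom μ₁ ∪ mdom μ₂ := by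
  ext x
  cases h : μ₁ x <;> simp [mdom, munion, h]

lemma mdom_restrict (μ : Mapping) (S : Finset Var) : mdom (restrict μ S) = ↑S ∩ mdom μ := by
  ext x
  by_cases hx : x ∈ S <;> simp [mdom, restrict, hx]

lemma compat_munion_left (μ₁ μ₂ : Mapping) : compat μ₁ (munion μ₁ μ₂) := by
  intro x a b ha hb
  simpa [munion, ha] using hb

lemma compat_restrict {μ μ' : Mapping} (h : compat μ μ') (S : Finset Var) :
    compat μ (restrict μ' S) := by
  intro x a b ha hb
  by_cases hx : x ∈ S
  · exact h x a b ha (by simpa [restrict, hx] using hb)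
  · simp [restrict, hx] at hb

lemma substPT_substPT (μ ν : Mapping) (p : PTerm) :
    substPT ν (substPT μ p) = substPT (munion μ ν) p := by
  rcases p with t | v
  · rfl
  · cases h : μ v <;> simp [substPT, munion, h]

lemma substTP_substTP (μ ν : Mapping) (tp : TriplePat) :
    substTP ν (substTP μ tp) = substTP (munion μ ν) tp := by
  simp only [substTP, substPT_substPT]

lemma substPT_congr {μ ν : Mapping} {p : PTerm} (h : ∀ v ∈ varsPT p, μ v = ν v) :
    substPT μ p = substPT ν p := by
  rcases p with t | v
  · rfl
  · simp [substPT, h v (by simp [varsPT])]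

lemma substTP_congr {μ ν : Mapping} {tp : TriplePat} (h : ∀ v ∈ varsTP tp, μ v = ν v) :
    substTP μ tp = substTP ν tp := by
  simp only [varsTP, Finset.mem_union] at h
  simp only [substTP]
  rw [substPT_congr fun v hv => h v (.inl (.inl hv)), substPT_congr fun v hv => h v (.inl (.inr hv)),
    substPT_congr fun v hv => h v (.inr hv)]

lemma instIn_congr {G : Graph} {μ ν : Mapping} {P : BGP} (h : ∀ v ∈ varsBGP P, μ v = ν v) :
    InstIn G μ P ↔ InstIn G ν P := by
  refine forall₂_congr fun tp htp => ?_
  rw [substTP_congr fun v hv => h v (Finset.mem_biUnion.2 ⟨tp, htp, hv⟩)]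

lemma instIn_substBGP (G : Graph) (μ ν : Mapping) (P : BGP) :
    InstIn G ν (substBGP μ P) ↔ InstIn G (munion μ ν) P := by
  simp only [InstIn, substBGP, Finset.forall_mem_image, substTP_substTP]

lemma mem_varsPT_substPT (μ : Mapping) (p : PTerm) (v : Var) :
    v ∈ varsPT (substPT μ p) ↔ v ∈ varsPT p ∧ μ v = none := by
  rcases p with t | w
  · simp [varsPT, substPT]
  · cases h : μ w <;> simp [varsPT, substPT, h] <;> grind

lemma mem_varsBGP_substBGP (μ : Mapping) (P : BGP) (v : Var) :
    v ∈ varsBGP (substBGP μ P) ↔ v ∈ varsBGP P ∧ μ v = none := by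
  simp only [varsBGP, substBGP, Finset.mem_biUnion, Finset.exists_mem_image, varsTP, substTP,
    Finset.mem_union, mem_varsPT_substPT, ← or_and_right]
  grind

lemma varsBGP_substBGP_subset (μ : Mapping) (P : BGP) : varsBGP (substBGP μ P) ⊆ varsBGP P :=
  fun v hv => ((mem_varsBGP_substBGP μ P v).1 hv).1

lemma mdom_eq_sv_of_mem_eval {G : Graph} {P : GP} (hP : NoUnionOpt P) {μ : Mapping}
    (hμ : μ ∈ eval G P) : mdom μ = ↑(sv P) := by
  induction P generalizing μ with
  | bgp P => rw [eval] at hμ; exact hμ.1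
  | and P₁ P₂ ih₁ ih₂ =>
    rw [eval] at hμ
    obtain ⟨μ₁, h₁, μ₂, h₂, -, rfl⟩ := hμ
    rw [mdom_munion, ih₁ hP.1 h₁, ih₂ hP.2 h₂, sv, Finset.coe_union]
  | union => exact hP.elim
  | minus P₁ P₂ ih₁ => rw [eval] at hμ; exact ih₁ hP.1 hμ.1
  | fe P₁ P₂ ih₁ => rw [eval] at hμ; exact ih₁ hP.1 hμ.1
  | fne P₁ P₂ ih₁ => rw [eval] at hμ; exact ih₁ hP.1 hμ.1
  | filter P R ih => rw [eval] at hμ; exact ih hP hμ.1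
  | opt => exact hP.elim

lemma bgpEval_substBGP_nonempty_iff (G : Graph) (μ : Mapping) (P : BGP) :
    (bgpEval G (substBGP μ P)).Nonempty ↔ ∃ μ' ∈ bgpEval G P, compat μ μ' := by
  constructor
  · rintro ⟨ν, hνdom, hνinst⟩
    refine ⟨restrict (munion μ ν) (varsBGP P), ⟨?_, ?_⟩,
      compat_restrict (compat_munion_left μ ν) _⟩
    · rw [mdom_restrict, mdom_munion, hνdom, Set.inter_eq_left]
      intro v hv
      by_cases hμv : μ v = none
      · exact .inr ((mem_varsBGP_substBGP μ P v).2 ⟨hv, hμv⟩)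
      · exact .inl hμv
    · rw [instIn_congr (ν := munion μ ν) fun v hv => by simp [restrict, hv], ← instIn_substBGP]
      exact hνinst
  · rintro ⟨μ', ⟨hμ'dom, hμ'inst⟩, hcompat⟩
    refine ⟨restrict μ' (varsBGP (substBGP μ P)), ?_, ?_⟩
    · rw [mdom_restrict, hμ'dom, Set.inter_eq_left]
      exact_mod_cast varsBGP_substBGP_subset μ P
    · rw [instIn_substBGP, instIn_congr (ν := μ')]
      · exact hμ'inst
      intro v hv
      obtain ⟨b, hb⟩ : ∃ b, μ' v = some b :=
        Option.ne_none_iff_exists'.1 (show v ∈ mdom μ' from hμ'dom ▸ hv)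
      cases hμv : μ v with
      | some a => simp [munion, hμv, hb, hcompat v a b hμv hb]
      | none =>
        have hv' := (mem_varsBGP_substBGP μ P v).2 ⟨hv, hμv⟩
        simp [munion, hμv, restrict, hv']

/-- If `P₁` contains no UNION and no OPT subpattern, `P₂` is a BGP
and `sv(P₁) ∩ var(P₂) ≠ ∅`, then `⟦MINUS(P₁,P₂)⟧_G = ⟦FNE(P₁,P₂)⟧_G`. -/
theorem minus_eq_fne (P₁ : GP) (hP₁ : NoUnionOpt P₁) (P₂ : BGP)
    (h : sv P₁ ∩ varsBGP P₂ ≠ ∅) (G : Graph) :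
    eval G (.minus P₁ (.bgp P₂)) = eval G (.fne P₁ (.bgp P₂)) := by
  ext μ
  simp only [eval, substGP, Set.mem_ofPred_eq, and_congr_right_iff]
  intro hμ
  have hshared : ∀ μ' ∈ bgpEval G P₂, mdom μ ∩ mdom μ' ≠ ∅ := by
    rintro μ' ⟨hμ'dom, -⟩
    rw [mdom_eq_sv_of_mem_eval hP₁ hμ, hμ'dom, ← Finset.coe_inter]
    exact_mod_cast h
  rw [← Set.not_nonempty_iff_eq_empty, bgpEval_substBGP_nonempty_iff]
  simp only [not_exists, not_and]
  exact forall₂_congr fun μ' hμ' => or_iff_left (hshared μ' hμ')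

end SparqlN3
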